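/- Assume h_{x,m} > 0 for all x ∈ V and all m ∈ {1,…,q}. Then for every non-negative function f : {0,1}^E → [0,∞), φ^f_{G;β,q,ĥ}(f) ≤ exp(β Σ_{x∈V} h_{x,max}) · φ^f_{G;β,q,0}(f), where 0 denotes the identically zero external field and h_{x,max} := max_{1≤m≤q} h_{x,m}. -/

import Mathlib

open Classical Finset

noncomputable section

/-- Two vertices are joined by an open edge of the configuration `ω`. -/
def OpenAdj {V E : Type*} (ends : E → V × V) (ω : E → Bool) (x y : V) : Prop :=
  ∃ e, ω e = true ∧ (ends e = (x, y) ∨ ends e = (y, x))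

/-- `x` and `y` lie in the same open cluster of the configuration `ω`. -/
def ConnIn {V E : Type*} (ends : E → V × V) (ω : E → Bool) (x y : V) : Prop :=
  Relation.ReflTransGen (OpenAdj ends ω) x y

/-- The open cluster of the vertex `x` in the configuration `ω`. -/
def cluster {V E : Type*} [Fintype V] (ends : E → V × V) (ω : E → Bool) (x : V) : Finset V :=
  Finset.univ.filter fun y => ConnIn ends ω x y

/-- The collection of all open clusters of the configuration `ω`
(the vertex sets of the connected components of the open subgraph). -/
def clusters {V E : Type*} [Fintype V] (ends : E → V × V) (ω : E → Bool) :
    Finset (Finset V) :=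
  Finset.univ.image fun x => cluster ends ω x

/-- The free cluster weight `Θ^f[C] = Σ_{m=1}^q exp(β Σ_{x∈C} h_{x,m})`. -/
def thetaF {V : Type*} (q : ℕ) (β : ℝ) (h : V → Fin q → ℝ) (C : Finset V) : ℝ :=
  ∑ m : Fin q, Real.exp (β * ∑ x ∈ C, h x m)

/-- The max-wired cluster weight: `Θ^f[C]` for clusters not touching the boundary `Vb`,
and `exp(β Σ_{x∈C} hmax x)` for clusters touching the boundary. -/
def thetaW {V : Type*} (q : ℕ) (β : ℝ) (h : V → Fin q → ℝ) (hmax : V → ℝ)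
    (Vb : Finset V) (C : Finset V) : ℝ :=
  if C ∩ Vb = ∅ then thetaF q β h C else Real.exp (β * ∑ x ∈ C, hmax x)

/-- The function `g^f(ω) = Π_C Θ^f[C]`, the product over the open clusters of `ω`. -/
def gFree {V E : Type*} [Fintype V] (ends : E → V × V) (q : ℕ) (β : ℝ)
    (h : V → Fin q → ℝ) (ω : E → Bool) : ℝ :=
  ∏ C ∈ clusters ends ω, thetaF q β h C

/-- The function `g^w(ω) = Π_C Θ^w[C]`, the product over the open clusters of `ω`. -/
def gWired {V E : Type*} [Fintype V] (ends : E → V × V) (q : ℕ) (β : ℝ)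
    (h : V → Fin q → ℝ) (hmax : V → ℝ) (Vb : Finset V) (ω : E → Bool) : ℝ :=
  ∏ C ∈ clusters ends ω, thetaW q β h hmax Vb C

/-- The edge factor `Π_e (exp(qβJ_e) − 1)^{ω_e}`. -/
def edgeFactor {E : Type*} [Fintype E] (q : ℕ) (β : ℝ) (J : E → ℝ) (ω : E → Bool) : ℝ :=
  ∏ e : E, if ω e then Real.exp ((q : ℝ) * β * J e) - 1 else 1

/-- The unnormalised weight of the free random-cluster measure. -/
def freeWeight {V E : Type*} [Fintype V] [Fintype E] (ends : E → V × V) (q : ℕ) (β : ℝ)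
    (J : E → ℝ) (h : V → Fin q → ℝ) (ω : E → Bool) : ℝ :=
  edgeFactor q β J ω * gFree ends q β h ω

/-- The expectation `φ^f_{G;β,q,ĥ}(f)` under the free random-cluster measure. -/
def freeExp {V E : Type*} [Fintype V] [Fintype E] (ends : E → V × V) (q : ℕ) (β : ℝ)
    (J : E → ℝ) (h : V → Fin q → ℝ) (f : (E → Bool) → ℝ) : ℝ :=
  (∑ ω : E → Bool, f ω * freeWeight ends q β J h ω) /
    ∑ ω : E → Bool, freeWeight ends q β J h ω

/-- The unnormalised weight of the max-wired random-cluster measure: supported on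
configurations opening all boundary edges `Eb`, with edge factor over interior edges
and cluster weights `Θ^w`. -/
def wiredWeight {V E : Type*} [Fintype V] [Fintype E] (ends : E → V × V) (q : ℕ) (β : ℝ)
    (J : E → ℝ) (h : V → Fin q → ℝ) (hmax : V → ℝ) (Vb : Finset V) (Eb : Finset E)
    (ω : E → Bool) : ℝ :=
  (if ∀ e ∈ Eb, ω e = true then (1 : ℝ) else 0) *
    (∏ e ∈ Ebᶜ, if ω e then Real.exp ((q : ℝ) * β * J e) - 1 else 1) *
    gWired ends q β h hmax Vb ω

/-- The expectation `φ^w_{G;β,q,ĥ}(f)` under the max-wired random-cluster measure. -/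
def wiredExp {V E : Type*} [Fintype V] [Fintype E] (ends : E → V × V) (q : ℕ) (β : ℝ)
    (J : E → ℝ) (h : V → Fin q → ℝ) (hmax : V → ℝ) (Vb : Finset V) (Eb : Finset E)
    (f : (E → Bool) → ℝ) : ℝ :=
  (∑ ω : E → Bool, f ω * wiredWeight ends q β J h hmax Vb Eb ω) /
    ∑ ω : E → Bool, wiredWeight ends q β J h hmax Vb Eb ω

/-- The expectation under the Bernoulli product measure in which each edge `e` is
independently open with probability `p_e = 1 − exp(−qβJ_e)`. -/
def bernExp {E : Type*} [Fintype E] (q : ℕ) (β : ℝ) (J : E → ℝ)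
    (f : (E → Bool) → ℝ) : ℝ :=
  ∑ ω : E → Bool, f ω *
    ∏ e : E, if ω e then 1 - Real.exp (-((q : ℝ) * β * J e))
      else Real.exp (-((q : ℝ) * β * J e))

/-- A function of configurations is increasing for the coordinatewise order. -/
def IncreasingFn {E : Type*} (f : (E → Bool) → ℝ) : Prop :=
  ∀ ⦃ω ω' : E → Bool⦄, (∀ e, ω e ≤ ω' e) → f ω ≤ f ω'

/-- Condition (★): there is a common colour `m*` attaining the maximal field
value `h_{x,max}` at every vertex `x`. -/
def StarCond {V : Type*} (q : ℕ) (h : V → Fin q → ℝ) : Prop :=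
  ∃ m : Fin q, ∀ x k, h x k ≤ h x m

/-- Compatibility of the boundary data: every boundary edge joins an interior vertex to a
boundary vertex, and every interior edge joins two interior vertices (this is the structure
of `E ∪ ∂E` for a finite subgraph `G = (V,E)` of the hypercubic lattice, with `Vb = ∂V`
and `Eb = ∂E`). -/
def BdryCompatible {V E : Type*} (ends : E → V × V) (Vb : Finset V) (Eb : Finset E) : Prop :=
  (∀ e ∈ Eb, ((ends e).1 ∈ Vb ∧ (ends e).2 ∉ Vb) ∨ ((ends e).1 ∉ Vb ∧ (ends e).2 ∈ Vb)) ∧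
    ∀ e ∉ Eb, (ends e).1 ∉ Vb ∧ (ends e).2 ∉ Vb

/-- Indicator of the event `{x ↔ y}`. -/
def connInd {V E : Type*} (ends : E → V × V) (x y : V) (ω : E → Bool) : ℝ :=
  if ConnIn ends ω x y then 1 else 0

/-- Indicator of the event `{x ↔ S}` that some vertex of `S` lies in the open cluster
of `x`. -/
def connToSetInd {V E : Type*} (ends : E → V × V) (x : V) (S : Finset V)
    (ω : E → Bool) : ℝ :=
  if ∃ y ∈ S, ConnIn ends ω x y then 1 else 0

/-! Each cluster weight satisfies `q ≤ Θ^f[C] ≤ q · exp(β Σ_{x∈C} h_{x,max})`. Since the clusters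
partition `V`, the product over the clusters gives `q^{k(ω)} ≤ g^f(ω) ≤ exp(β Σ_x h_{x,max}) q^{k(ω)}`,
so the unnormalised weight with field `ĥ` is at most `exp(β Σ_x h_{x,max})` times the zero-field
weight, while the partition function with field `ĥ` is at least the zero-field one. -/

theorem div_sum_le_mul_div_sum {ι : Type*} (s : Finset ι) {f w w₀ : ι → ℝ} {c : ℝ}
    (hf : ∀ i ∈ s, 0 ≤ f i) (hw₀ : ∀ i ∈ s, 0 ≤ w₀ i) (hw : ∀ i ∈ s, w i ≤ c * w₀ i)
    (hsum : ∑ i ∈ s, w₀ i ≤ ∑ i ∈ s, w i) (hpos : 0 < ∑ i ∈ s, w₀ i) :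
    (∑ i ∈ s, f i * w i) / ∑ i ∈ s, w i ≤ c * ((∑ i ∈ s, f i * w₀ i) / ∑ i ∈ s, w₀ i) := by
  have hc : 0 ≤ c := by
    have hsum_le : ∑ i ∈ s, w i ≤ c * ∑ i ∈ s, w₀ i := by
      rw [Finset.mul_sum]; exact Finset.sum_le_sum hw
    exact nonneg_of_mul_nonneg_left (hpos.le.trans (hsum.trans hsum_le)) hpos
  have hnum : ∑ i ∈ s, f i * w i ≤ c * ∑ i ∈ s, f i * w₀ i := by
    rw [Finset.mul_sum]
    refine Finset.sum_le_sum fun i hi => ?_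
    calc f i * w i ≤ f i * (c * w₀ i) := mul_le_mul_of_nonneg_left (hw i hi) (hf i hi)
      _ = c * (f i * w₀ i) := by ring
  rw [← mul_div_assoc]
  exact div_le_div₀ (mul_nonneg hc (Finset.sum_nonneg fun i hi => mul_nonneg (hf i hi) (hw₀ i hi)))
    hnum hpos hsum

section Clusters

variable {V E : Type*} {ends : E → V × V} {ω : E → Bool}

theorem ConnIn.symm {x y : V} (hxy : ConnIn ends ω x y) : ConnIn ends ω y x := by
  refine (@Relation.ReflTransGen.stdSymm _ _ ⟨?_⟩).symm _ _ hxy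
  rintro a b ⟨e, he, hends⟩
  exact ⟨e, he, hends.symm⟩

variable [Fintype V]

theorem mem_cluster {x y : V} : y ∈ cluster ends ω x ↔ ConnIn ends ω x y := by
  simp [cluster]

theorem cluster_eq_of_connIn {x y : V} (hxy : ConnIn ends ω x y) :
    cluster ends ω x = cluster ends ω y := by
  ext z
  simp only [mem_cluster]
  exact ⟨hxy.symm.trans, hxy.trans⟩

theorem biUnion_clusters : (clusters ends ω).biUnion id = Finset.univ :=
  Finset.eq_univ_of_forall fun x => Finset.mem_biUnion.2
    ⟨cluster ends ω x, Finset.mem_image_of_mem _ (Finset.mem_univ x),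
      mem_cluster.2 Relation.ReflTransGen.refl⟩

theorem pairwiseDisjoint_clusters :
    (clusters ends ω : Set (Finset V)).PairwiseDisjoint id := by
  simp only [clusters, Finset.coe_image]
  rintro _ ⟨a, -, rfl⟩ _ ⟨b, -, rfl⟩ hab
  refine Finset.disjoint_left.2 fun z hza hzb => hab ?_
  change cluster ends ω a = cluster ends ω b
  rw [cluster_eq_of_connIn (mem_cluster.1 hza), cluster_eq_of_connIn (mem_cluster.1 hzb)]

theorem sum_clusters_sum {M : Type*} [AddCommMonoid M] (g : V → M) :
    ∑ C ∈ clusters ends ω, ∑ x ∈ C, g x = ∑ x, g x := by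
  rw [← biUnion_clusters (ends := ends) (ω := ω), Finset.sum_biUnion pairwiseDisjoint_clusters]
  rfl

end Clusters

section ClusterWeights

variable {V : Type*} {q : ℕ} {β : ℝ} {h : V → Fin q → ℝ}

@[simp]
theorem thetaF_zero (q : ℕ) (β : ℝ) (C : Finset V) :
    thetaF q β (fun _ _ => (0 : ℝ)) C = q := by
  simp [thetaF]

theorem thetaF_nonneg (C : Finset V) : 0 ≤ thetaF q β h C :=
  Finset.sum_nonneg fun _ _ => (Real.exp_pos _).le

theorem natCast_le_thetaF (hβ : 0 ≤ β) (h_nonneg : ∀ x m, 0 ≤ h x m) (C : Finset V) :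
    (q : ℝ) ≤ thetaF q β h C :=
  calc (q : ℝ) = ∑ _m : Fin q, (1 : ℝ) := by simp
    _ ≤ thetaF q β h C := Finset.sum_le_sum fun m _ =>
      Real.one_le_exp (mul_nonneg hβ (Finset.sum_nonneg fun x _ => h_nonneg x m))

theorem thetaF_le {hmax : V → ℝ} (hβ : 0 ≤ β) (h_le : ∀ x m, h x m ≤ hmax x) (C : Finset V) :
    thetaF q β h C ≤ q * Real.exp (β * ∑ x ∈ C, hmax x) :=
  calc thetaF q β h C ≤ ∑ _m : Fin q, Real.exp (β * ∑ x ∈ C, hmax x) :=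
        Finset.sum_le_sum fun m _ => Real.exp_le_exp.2 <|
          mul_le_mul_of_nonneg_left (Finset.sum_le_sum fun x _ => h_le x m) hβ
    _ = q * Real.exp (β * ∑ x ∈ C, hmax x) := by simp

variable [Fintype V] {E : Type*} (ends : E → V × V) (ω : E → Bool)

theorem gFree_zero_pos (hq : 0 < q) : 0 < gFree ends q β (fun _ _ => (0 : ℝ)) ω :=
  Finset.prod_pos fun C _ => by simpa using hq

theorem gFree_zero_le_gFree (hβ : 0 ≤ β) (h_nonneg : ∀ x m, 0 ≤ h x m) :
    gFree ends q β (fun _ _ => (0 : ℝ)) ω ≤ gFree ends q β h ω :=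
  Finset.prod_le_prod (fun C _ => by simp) fun C _ => by
    simpa using natCast_le_thetaF hβ h_nonneg C

theorem gFree_le_exp_mul_gFree_zero {hmax : V → ℝ} (hβ : 0 ≤ β)
    (h_le : ∀ x m, h x m ≤ hmax x) :
    gFree ends q β h ω ≤ Real.exp (β * ∑ x, hmax x) * gFree ends q β (fun _ _ => (0 : ℝ)) ω := by
  have h_exp : ∏ C ∈ clusters ends ω, Real.exp (β * ∑ x ∈ C, hmax x) =
      Real.exp (β * ∑ x, hmax x) := by
    rw [← Real.exp_sum, ← Finset.mul_sum, sum_clusters_sum]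
  calc gFree ends q β h ω
      ≤ ∏ C ∈ clusters ends ω, (q * Real.exp (β * ∑ x ∈ C, hmax x)) :=
        Finset.prod_le_prod (fun C _ => thetaF_nonneg C) fun C _ => thetaF_le hβ h_le C
    _ = Real.exp (β * ∑ x, hmax x) * gFree ends q β (fun _ _ => (0 : ℝ)) ω := by
      rw [Finset.prod_mul_distrib, h_exp, mul_comm]
      simp [gFree]

end ClusterWeights

theorem edgeFactor_nonneg {E : Type*} [Fintype E] {q : ℕ} {β : ℝ} {J : E → ℝ} (hβ : 0 ≤ β)
    (hJ : ∀ e, 0 ≤ J e) (ω : E → Bool) : 0 ≤ edgeFactor q β J ω :=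
  Finset.prod_nonneg fun e _ => by
    cases ω e
    · exact zero_le_one
    · exact sub_nonneg.2 (Real.one_le_exp (mul_nonneg (mul_nonneg q.cast_nonneg hβ) (hJ e)))

/-- for a positive external field, the free measure with field `ĥ` of a
non-negative function is at most `exp(β Σ_{x∈V} h_{x,max})` times the free zero-field
measure of that function. -/
theorem stmt15 {V E : Type*} [Fintype V] [Fintype E] (ends : E → V × V)
    (q : ℕ) (hq : 2 ≤ q) (β : ℝ) (hβ : 0 < β)
    (J : E → ℝ) (hJ : ∀ e, 0 ≤ J e)
    (h : V → Fin q → ℝ) (hmax : V → ℝ)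
    (hpos : ∀ x m, 0 < h x m)
    (hmaxdef : ∀ x, IsGreatest (Set.range (h x)) (hmax x))
    (f : (E → Bool) → ℝ) (hf : ∀ ω, 0 ≤ f ω) :
    freeExp ends q β J h f ≤
      Real.exp (β * ∑ x : V, hmax x) * freeExp ends q β J (fun _ _ => (0 : ℝ)) f := by
  have hq₀ : 0 < q := by omega
  have h_le : ∀ x m, h x m ≤ hmax x := fun x m => (hmaxdef x).2 ⟨m, rfl⟩
  have h_nonneg : ∀ x m, 0 ≤ h x m := fun x m => (hpos x m).le
  have hedge := edgeFactor_nonneg (q := q) hβ.le hJ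
  refine div_sum_le_mul_div_sum _ (fun ω _ => hf ω)
    (fun ω _ => mul_nonneg (hedge ω) (gFree_zero_pos ends ω hq₀).le)
    (fun ω _ => ?_) (Finset.sum_le_sum fun ω _ => ?_) ?_
  · rw [freeWeight, freeWeight, mul_left_comm]
    exact mul_le_mul_of_nonneg_left (gFree_le_exp_mul_gFree_zero ends ω hβ.le h_le) (hedge ω)
  · exact mul_le_mul_of_nonneg_left (gFree_zero_le_gFree ends ω hβ.le h_nonneg) (hedge ω)
  · refine Finset.sum_pos' (fun ω _ => mul_nonneg (hedge ω) (gFree_zero_pos ends ω hq₀).le)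
      ⟨fun _ => false, Finset.mem_univ _, ?_⟩
    simpa [freeWeight, edgeFactor] using gFree_zero_pos ends (fun _ : E => false) hq₀
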